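/- arXiv:2312.14771 — 5 statements merged into one kernel-verified Lean document; each statement's English description precedes it below -/
import Mathlib

section
/- Let τ ∈ ℝ^q \ {0} and σ ∈ ℝ^q \ {0}, and suppose (ξ, η) ∈ ℝ^(q×p) × ℝ^p satisfies A_σ e^{-s A_τ}(ξ, η) = (0,0) for all s ∈ ℝ. Then η = 0, ξ^T τ = 0, and the column space of ξ is contained in σ^⊥ ∩ τ^⊥; in particular e^{-s A_τ}(ξ, 0) = (ξ, 0) for all s. -/
open scoped BigOperators

/-- `V₁ = ℝ^(q×p) × ℝ^p`. -/
abbrev V (q p : ℕ) := (Fin q → Fin p → ℝ) × (Fin p → ℝ)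

/-- The linear map `A_τ(ξ,η) = (τηᵀ, -ξᵀτ)` as a continuous linear map. -/
noncomputable def AL (q p : ℕ) (τ : Fin q → ℝ) : V q p →L[ℝ] V q p :=
  LinearMap.toContinuousLinearMap
    { toFun := fun v => (fun i j => τ i * v.2 j, fun k => -∑ i, v.1 i k * τ i)
      map_add' := by
        intro a b
        refine Prod.ext ?_ ?_
        · funext i j; simp [mul_add]
        · funext k
          simp [Finset.sum_add_distrib, add_mul]
          ring
      map_smul' := by
        intro c a
        refine Prod.ext ?_ ?_
        · funext i j
          simp [Pi.smul_apply, smul_eq_mul]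
          ring
        · funext k
          simp only [Pi.smul_apply, smul_eq_mul, RingHom.id_apply, Prod.smul_fst,
            Prod.smul_snd, mul_neg, Finset.mul_sum]
          exact neg_eq_iff_eq_neg.mpr (by rw [neg_neg]; exact Finset.sum_congr rfl fun i _ => by ring) }

lemma AL_apply (q p : ℕ) (τ : Fin q → ℝ) (v : V q p) :
    AL q p τ v = (fun i j => τ i * v.2 j, fun k => -∑ i, v.1 i k * τ i) := rfl

lemma exp_apply_of_ker {E : Type*} [NormedAddCommGroup E] [NormedSpace ℝ E] [CompleteSpace E]
    (B : E →L[ℝ] E) (v : E) (hv : B v = 0) : NormedSpace.exp B v = v := by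
  rw [NormedSpace.exp_eq_tsum (𝕂 := ℝ)]
  have hsum := NormedSpace.expSeries_summable' (𝕂 := ℝ) B
  have := (ContinuousLinearMap.apply ℝ E v).map_tsum hsum
  simp only [ContinuousLinearMap.apply_apply] at this
  rw [this, tsum_eq_single 0]
  · simp
  · intro n hn
    obtain ⟨m, rfl⟩ := Nat.exists_eq_succ_of_ne_zero hn
    rw [pow_succ]
    simp [ContinuousLinearMap.mul_apply, hv]

set_option maxHeartbeats 1000000 in
/-- If `A_σ e^{-sA_τ}(ξ,η) = 0` for all `s` (with `σ, τ ≠ 0`), then `η = 0`, `ξᵀτ = 0`,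
the column space of `ξ` is contained in `σ^⊥ ∩ τ^⊥`, and `e^{-sA_τ}(ξ,0) = (ξ,0)`. -/
theorem stmt6 {q p : ℕ} (τ σ : Fin q → ℝ) (hτ : τ ≠ 0) (hσ : σ ≠ 0)
    (ξ : Fin q → Fin p → ℝ) (η : Fin p → ℝ)
    (h : ∀ s : ℝ, AL q p σ (NormedSpace.exp ((-s) • AL q p τ) ((ξ, η) : V q p)) = 0) :
    η = 0 ∧ (∀ k, ∑ i, ξ i k * τ i = 0) ∧
      (∀ y : Fin p → ℝ,
        (∑ i, σ i * ∑ j, ξ i j * y j) = 0 ∧ (∑ i, τ i * ∑ j, ξ i j * y j) = 0) ∧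
      (∀ s : ℝ, NormedSpace.exp ((-s) • AL q p τ) ((ξ, 0) : V q p) = (ξ, 0)) := by
  obtain ⟨i₀, hi₀⟩ : ∃ i, σ i ≠ 0 := Function.ne_iff.mp hσ
  -- from s = 0 : A_σ (ξ, η) = 0
  have h0 : AL q p σ ((ξ, η) : V q p) = 0 := by
    have := h 0
    rwa [neg_zero, zero_smul, NormedSpace.exp_zero, ContinuousLinearMap.one_apply] at this
  rw [AL_apply] at h0
  have h0f : ∀ i j, σ i * η j = 0 := fun i j =>
    congrFun (congrFun (congrArg Prod.fst h0) i) j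
  have h0s : ∀ k, ∑ i, ξ i k * σ i = 0 := fun k => by
    have := congrFun (congrArg Prod.snd h0) k
    simpa [neg_eq_zero] using this
  have hη : η = 0 := by
    funext j
    have := h0f i₀ j
    exact (mul_eq_zero.mp this).resolve_left hi₀
  subst hη
  -- derivative at 0 : A_σ ((-1) • (A_τ (ξ,0))) = 0
  set B := AL q p τ with hB
  set C := AL q p σ with hC
  have hexp : HasDerivAt (fun u : ℝ => NormedSpace.exp (u • B))
      (NormedSpace.exp ((0:ℝ) • B) * B) 0 :=
    hasDerivAt_exp_smul_const B (0 : ℝ)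
  have hneg : HasDerivAt (fun s : ℝ => -s) (-1 : ℝ) 0 := hasDerivAt_neg 0
  have hF : HasDerivAt (fun s : ℝ => NormedSpace.exp ((-s) • B)) (-B) 0 := by
    have := HasDerivAt.scomp (0 : ℝ) (by simpa using hexp) hneg
    simpa [Function.comp_def] using this
  have hg : HasDerivAt (fun s : ℝ => NormedSpace.exp ((-s) • B) ((ξ, 0) : V q p))
      ((-B) ((ξ, 0) : V q p)) 0 := by
    have := hF.clm_apply (hasDerivAt_const (0:ℝ) ((ξ, 0) : V q p))
    simpa using this
  have hCg : HasDerivAt (fun s : ℝ => C (NormedSpace.exp ((-s) • B) ((ξ, 0) : V q p)))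
      (C ((-B) ((ξ, 0) : V q p))) 0 :=
    C.hasFDerivAt.comp_hasDerivAt 0 hg
  have hconst : (fun s : ℝ => C (NormedSpace.exp ((-s) • B) ((ξ, 0) : V q p)))
      = fun _ => (0 : V q p) := funext fun s => h s
  have hderiv0 : C ((-B) ((ξ, 0) : V q p)) = 0 := by
    have h2 : HasDerivAt (fun _ : ℝ => (0 : V q p)) (0 : V q p) 0 := hasDerivAt_const _ _
    rw [hconst] at hCg
    exact hCg.unique h2
  have hkey : C (B ((ξ, 0) : V q p)) = 0 := by
    rw [ContinuousLinearMap.neg_apply, map_neg, neg_eq_zero] at hderiv0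
    exact hderiv0
  -- extract ξᵀτ = 0
  have hξτ : ∀ k, ∑ i, ξ i k * τ i = 0 := by
    intro k
    rw [hB, hC, AL_apply, AL_apply] at hkey
    have := congrFun (congrFun (congrArg Prod.fst hkey) i₀) k
    simp only [Prod.fst_zero, Pi.zero_apply] at this
    have h3 : σ i₀ * -∑ i, ξ i k * τ i = 0 := this
    rcases mul_eq_zero.mp h3 with h4 | h4
    · exact absurd h4 hi₀
    · linarith [h4]
  have hBfix : B ((ξ, 0) : V q p) = 0 := by
    rw [hB, AL_apply]
    refine Prod.ext ?_ ?_
    · funext i j; simp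
    · funext k; simp [hξτ k]
  refine ⟨rfl, hξτ, fun y => ⟨?_, ?_⟩, fun s => ?_⟩
  · simp_rw [Finset.mul_sum]
    rw [Finset.sum_comm]
    refine Finset.sum_eq_zero fun j _ => ?_
    have : ∑ i, σ i * (ξ i j * y j) = (∑ i, ξ i j * σ i) * y j := by
      rw [Finset.sum_mul]; exact Finset.sum_congr rfl fun i _ => by ring
    rw [this, h0s j, zero_mul]
  · simp_rw [Finset.mul_sum]
    rw [Finset.sum_comm]
    refine Finset.sum_eq_zero fun j _ => ?_
    have : ∑ i, τ i * (ξ i j * y j) = (∑ i, ξ i j * τ i) * y j := by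
      rw [Finset.sum_mul]; exact Finset.sum_congr rfl fun i _ => by ring
    rw [this, hξτ j, zero_mul]
  · exact exp_apply_of_ker _ _ (by rw [ContinuousLinearMap.smul_apply, hBfix, smul_zero])
end

section
/- Let τ ∈ ℝ^q with |τ| = 1, ξ ∈ ℝ^(q×p), η ∈ ℝ^p, and set x = 2π P_τ^⊥ ξ and t = π(|P_τ ξ|² + |η|²)τ - 2π P_τ^⊥ ξ (ξ^T τ). If |η|² + |P_τ ξ|² > 0, then t ∉ Im x and |P_{Im x}^⊥ t| ≥ π |x^† t|², where x^† is the Moore-Penrose pseudoinverse of x. -/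
open scoped BigOperators
open Real

/-- The column space (image) of a matrix `x ∈ ℝ^(q×p)`. -/
def Im {q p : ℕ} (x : Fin q → Fin p → ℝ) : Set (Fin q → ℝ) :=
  Set.range fun y : Fin p → ℝ => (fun i => ∑ j, x i j * y j : Fin q → ℝ)

/-- A cut point `(x,0,t)` with `x = 2π P_τ^⊥ξ`,
`t = π(|P_τξ|² + |η|²)τ - 2π P_τ^⊥ξ (ξᵀτ)` satisfies `t ∉ Im x` and
`|P_{Im x}^⊥ t| ≥ π |x^† t|²`. The orthogonal decomposition `t = tpar + tperp`
(`tpar ∈ Im x`, `tperp ⊥ Im x`) and the minimal-norm solution `y₀`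
(`x y₀ = tpar`, `y₀ ⊥ ker x`), i.e. `y₀ = x^† t`, are quantified universally. -/
theorem stmt7 {q p : ℕ} (τ : Fin q → ℝ) (hτ : ∑ a, τ a * τ a = 1)
    (ξ : Fin q → Fin p → ℝ) (η : Fin p → ℝ)
    (x : Fin q → Fin p → ℝ) (t : Fin q → ℝ)
    (hx : x = fun i j => 2 * π * (ξ i j - τ i * ∑ a, τ a * ξ a j))
    (ht : t = fun i =>
      π * ((∑ k, (∑ a, ξ a k * τ a) ^ 2) + ∑ k, η k ^ 2) * τ i -
        2 * π * ∑ k, (ξ i k - τ i * ∑ a, τ a * ξ a k) * (∑ a, ξ a k * τ a))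
    (hpos : (∑ k, η k ^ 2) + ∑ k, (∑ a, ξ a k * τ a) ^ 2 > 0) :
    t ∉ Im x ∧
      ∀ tpar tperp : Fin q → ℝ, ∀ y₀ : Fin p → ℝ,
        t = tpar + tperp → tpar ∈ Im x →
        (∀ v ∈ Im x, ∑ i, tperp i * v i = 0) →
        (fun i => ∑ j, x i j * y₀ j) = tpar →
        (∀ μ : Fin p → ℝ, (fun i => ∑ j, x i j * μ j) = (0 : Fin q → ℝ) →
          ∑ k, y₀ k * μ k = 0) →
        Real.sqrt (∑ i, tperp i ^ 2) ≥ π * ∑ k, y₀ k ^ 2 := by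
  have hπ := Real.pi_pos
  -- abbreviations
  set w : Fin p → ℝ := fun k => ∑ a, ξ a k * τ a with hwdef
  have hB : (∑ k, (∑ a, ξ a k * τ a) ^ 2) = ∑ k, w k ^ 2 := rfl
  set c : ℝ := π * ((∑ k, w k ^ 2) + ∑ k, η k ^ 2) with hcdef
  have hcpos : 0 < c := by
    apply mul_pos hπ
    rw [← hB]; linarith
  -- each column of x is orthogonal to τ
  have hcol : ∀ j, (∑ i, τ i * x i j) = 0 := by
    intro j
    have h1 : ∀ i, τ i * x i j
        = 2 * π * (τ i * ξ i j) - (2 * π * ∑ a, τ a * ξ a j) * (τ i * τ i) := by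
      intro i; rw [hx]; ring
    rw [Finset.sum_congr rfl fun i _ => h1 i, Finset.sum_sub_distrib,
      ← Finset.mul_sum, ← Finset.mul_sum, hτ]
    ring
  -- τ is orthogonal to Im x
  have hτIm : ∀ y : Fin p → ℝ, (∑ i, τ i * ∑ j, x i j * y j) = 0 := by
    intro y
    have h1 : ∀ i, τ i * ∑ j, x i j * y j = ∑ j, τ i * x i j * y j := by
      intro i
      rw [Finset.mul_sum]
      exact Finset.sum_congr rfl fun j _ => by ring
    rw [Finset.sum_congr rfl fun i _ => h1 i, Finset.sum_comm]
    apply Finset.sum_eq_zero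
    intro j _
    rw [← Finset.sum_mul, hcol, zero_mul]
  -- t = c • τ - x w
  have hT : ∀ i, t i = c * τ i - ∑ j, x i j * w j := by
    intro i
    have h2 : ∑ j, x i j * w j
        = 2 * π * ∑ k, (ξ i k - τ i * ∑ a, τ a * ξ a k) * (∑ a, ξ a k * τ a) := by
      rw [Finset.mul_sum]
      refine Finset.sum_congr rfl fun j _ => ?_
      rw [hx]; ring
    rw [ht, h2, hcdef, hB]
  -- ⟨τ, t⟩ = c
  have hτt : (∑ i, τ i * t i) = c := by
    have h1 : ∀ i, τ i * t i = c * (τ i * τ i) - τ i * ∑ j, x i j * w j := by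
      intro i; rw [hT i]; ring
    rw [Finset.sum_congr rfl fun i _ => h1 i, Finset.sum_sub_distrib,
      ← Finset.mul_sum, hτ, hτIm]
    ring
  constructor
  · rintro ⟨y, hy⟩
    have h0 : (∑ i, τ i * t i) = 0 := by
      rw [← hy]; exact hτIm y
    rw [hτt] at h0
    exact absurd h0 (ne_of_gt hcpos)
  · intro tpar tperp y₀ hdec hparim hperp hy0 hker
    obtain ⟨y, hy⟩ := hparim
    -- u = x (y + w) = tpar + x w
    have hu : ∀ i, (∑ j, x i j * (y j + w j)) = tpar i + ∑ j, x i j * w j := by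
      intro i
      have : ∀ j, x i j * (y j + w j) = x i j * y j + x i j * w j := fun j => by ring
      rw [Finset.sum_congr rfl fun j _ => this j, Finset.sum_add_distrib,
        ← congrFun hy i]
    -- tperp i = c * τ i - u i
    have hperp_eq : ∀ i, tperp i = c * τ i - ∑ j, x i j * (y j + w j) := by
      intro i
      have := congrFun hdec i
      simp only [Pi.add_apply] at this
      rw [hu i]
      have := hT i
      -- t i = tpar i + tperp i
      linarith [congrFun hdec i, hT i, hu i]
    -- u ∈ Im x so ⟨tperp, u⟩ = 0
    have humem : (fun i => ∑ j, x i j * (y j + w j)) ∈ Im x := ⟨y + w, rfl⟩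
    have horth := hperp (fun i => ∑ j, x i j * (y j + w j)) humem
    -- hence ∑ u i ^2 = 0, so u = 0
    have husq : (∑ i, (∑ j, x i j * (y j + w j)) ^ 2) = 0 := by
      have h1 : ∀ i, tperp i * (∑ j, x i j * (y j + w j))
          = c * (τ i * (∑ j, x i j * (y j + w j)))
            - (∑ j, x i j * (y j + w j)) ^ 2 := by
        intro i; rw [hperp_eq i]; ring
      rw [Finset.sum_congr rfl fun i _ => h1 i, Finset.sum_sub_distrib,
        ← Finset.mul_sum, hτIm (fun j => y j + w j)] at horth
      linarith
    have huzero : ∀ i, (∑ j, x i j * (y j + w j)) = 0 := by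
      intro i
      have := (Finset.sum_eq_zero_iff_of_nonneg
        (fun i _ => sq_nonneg (∑ j, x i j * (y j + w j)))).mp husq i (Finset.mem_univ i)
      exact pow_eq_zero_iff (two_ne_zero) |>.mp this
    -- so tperp = c • τ
    have hperp_cτ : ∀ i, tperp i = c * τ i := by
      intro i; rw [hperp_eq i, huzero i]; ring
    -- sqrt (∑ tperp²) = c
    have hs : Real.sqrt (∑ i, tperp i ^ 2) = c := by
      have h1 : (∑ i, tperp i ^ 2) = c ^ 2 := by
        have h2 : ∀ i, tperp i ^ 2 = c ^ 2 * (τ i * τ i) := by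
          intro i; rw [hperp_cτ i]; ring
        rw [Finset.sum_congr rfl fun i _ => h2 i, ← Finset.mul_sum, hτ, mul_one]
      rw [h1, Real.sqrt_sq hcpos.le]
    -- y₀ + w is in ker x
    have hker0 : (fun i => ∑ j, x i j * (y₀ j + w j)) = (0 : Fin q → ℝ) := by
      funext i
      have h1 : ∀ j, x i j * (y₀ j + w j) = x i j * y₀ j + x i j * w j := fun j => by ring
      have h2 : (∑ j, x i j * (y₀ j + w j)) = tpar i + ∑ j, x i j * w j := by
        rw [Finset.sum_congr rfl fun j _ => h1 j, Finset.sum_add_distrib,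
          ← congrFun hy0 i]
      have h3 := hu i
      rw [Pi.zero_apply, h2, ← h3, huzero i]
    have hker1 := hker (fun j => y₀ j + w j) hker0
    -- ∑ y₀² = - ∑ y₀ w
    have hA : (∑ k, y₀ k ^ 2) = - ∑ k, y₀ k * w k := by
      have h1 : ∀ k, y₀ k * (y₀ k + w k) = y₀ k ^ 2 + y₀ k * w k := fun k => by ring
      rw [Finset.sum_congr rfl fun k _ => h1 k, Finset.sum_add_distrib] at hker1
      linarith
    -- Cauchy-Schwarz: (∑ y₀ w)² ≤ (∑ y₀²)(∑ w²)
    have hcs := Finset.sum_mul_sq_le_sq_mul_sq Finset.univ y₀ w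
    have hAnonneg : (0:ℝ) ≤ ∑ k, y₀ k ^ 2 := Finset.sum_nonneg fun k _ => sq_nonneg _
    have hAB : (∑ k, y₀ k ^ 2) ≤ ∑ k, w k ^ 2 := by
      rcases eq_or_lt_of_le hAnonneg with h | h
      · rw [← h]; exact Finset.sum_nonneg fun k _ => sq_nonneg _
      · nlinarith [hA, hcs]
    have hEnonneg : (0:ℝ) ≤ ∑ k, η k ^ 2 := Finset.sum_nonneg fun k _ => sq_nonneg _
    rw [hs, hcdef]
    nlinarith [hAB, hEnonneg, hπ]
end

section
/- Let τ ∈ ℝ^q with |τ| = 1, ξ ∈ ℝ^(q×p), η ∈ ℝ^p, and set x = 2π P_τ^⊥ ξ and t = π(|P_τ ξ|² + |η|²)τ - 2π P_τ^⊥ ξ (ξ^T τ). Then 4π²(|ξ|² + |η|²) = |x|² + 4π|P_{Im x}^⊥ t|. -/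
open scoped BigOperators
open Real

/-- Distance formula: for the cut point `(x,0,t)` with `x = 2π P_τ^⊥ξ`,
`t = π(|P_τξ|² + |η|²)τ - 2π P_τ^⊥ξ (ξᵀτ)` (τ a unit vector), one has
`4π²(|ξ|² + |η|²) = |x|² + 4π|P_{Im x}^⊥ t|`, where `tperp = P_{Im x}^⊥ t` is the
component of `t` orthogonal to `Im x`. -/
theorem stmt10 {q p : ℕ} (τ : Fin q → ℝ) (hτ : ∑ a, τ a * τ a = 1)
    (ξ : Fin q → Fin p → ℝ) (η : Fin p → ℝ)
    (x : Fin q → Fin p → ℝ) (t : Fin q → ℝ)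
    (hx : x = fun i j => 2 * π * (ξ i j - τ i * ∑ a, τ a * ξ a j))
    (ht : t = fun i =>
      π * ((∑ k, (∑ a, ξ a k * τ a) ^ 2) + ∑ k, η k ^ 2) * τ i -
        2 * π * ∑ k, (ξ i k - τ i * ∑ a, τ a * ξ a k) * (∑ a, ξ a k * τ a)) :
    ∀ tpar tperp : Fin q → ℝ,
      t = tpar + tperp → tpar ∈ Im x →
      (∀ v ∈ Im x, ∑ i, tperp i * v i = 0) →
      4 * π ^ 2 * ((∑ i, ∑ j, ξ i j ^ 2) + ∑ k, η k ^ 2) =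
        (∑ i, ∑ j, x i j ^ 2) + 4 * π * Real.sqrt (∑ i, tperp i ^ 2) := by
  intro tpar tperp hsum hpar hperp
  have hπ : (0:ℝ) < π := Real.pi_pos
  set c : ℝ := π * ((∑ k, (∑ a, ξ a k * τ a) ^ 2) + ∑ k, η k ^ 2) with hc
  have hc0 : 0 ≤ c := by
    apply mul_nonneg hπ.le
    positivity
  -- per-column fact: τ is orthogonal to every column of x
  have hcol : ∀ j, (∑ i, τ i * x i j) = 0 := by
    intro j
    have h1 : (∑ i, τ i * ξ i j) = ∑ a, τ a * ξ a j := rfl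
    have h2 : (∑ i, τ i * x i j)
        = ∑ i, (2 * π * (τ i * ξ i j) - (2 * π * (∑ a, τ a * ξ a j)) * (τ i * τ i)) := by
      refine Finset.sum_congr rfl fun i _ => ?_
      rw [hx]; ring
    rw [h2, Finset.sum_sub_distrib, ← Finset.mul_sum, ← Finset.mul_sum, h1, hτ]
    ring
  -- τ is orthogonal to Im x
  have hτx : ∀ v ∈ Im x, (∑ i, τ i * v i) = 0 := by
    rintro v ⟨y, rfl⟩
    calc (∑ i, τ i * ∑ j, x i j * y j)
        = ∑ i, ∑ j, τ i * x i j * y j := by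
          refine Finset.sum_congr rfl fun i _ => ?_
          rw [Finset.mul_sum]
          exact Finset.sum_congr rfl fun j _ => (mul_assoc _ _ _).symm
      _ = ∑ j, ∑ i, τ i * x i j * y j := Finset.sum_comm
      _ = ∑ j, (∑ i, τ i * x i j) * y j := by
          refine Finset.sum_congr rfl fun j _ => (Finset.sum_mul _ _ _).symm
      _ = 0 := by simp [hcol]
  -- the correction term is in Im x
  set u : Fin q → ℝ := fun i => ∑ j, x i j * (-(∑ a, ξ a j * τ a)) with hu
  have huIm : u ∈ Im x := ⟨fun j => -(∑ a, ξ a j * τ a), rfl⟩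
  -- t decomposes as c • τ + u
  have htu : ∀ i, t i = c * τ i + u i := by
    intro i
    have key : (∑ k, 2 * π * (ξ i k - τ i * ∑ a, τ a * ξ a k) * (-(∑ a, ξ a k * τ a)))
        = -(2 * π * ∑ k, (ξ i k - τ i * ∑ a, τ a * ξ a k) * (∑ a, ξ a k * τ a)) := by
      rw [Finset.mul_sum, ← Finset.sum_neg_distrib]
      exact Finset.sum_congr rfl fun k _ => by ring
    rw [ht, hu]
    simp only
    rw [hx]
    simp only
    rw [key]
    ring
  -- the difference w = cτ - tperp is in Im x (it equals tpar - u)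
  obtain ⟨y1, hy1⟩ := hpar
  have hwIm : (fun i => c * τ i - tperp i) ∈ Im x := by
    refine ⟨fun j => y1 j - (-(∑ a, ξ a j * τ a)), ?_⟩
    funext i
    have h1 : c * τ i - tperp i = tpar i - u i := by
      have := congrFun hsum i
      simp only [Pi.add_apply] at this
      have h2 := htu i
      linarith [this, h2]
    rw [h1, ← hy1, hu]
    simp only
    rw [← Finset.sum_sub_distrib]
    refine Finset.sum_congr rfl fun j _ => ?_
    ring
  -- w = 0, hence tperp = cτ
  have hw0 : (∑ i, (c * τ i - tperp i) ^ 2) = 0 := by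
    have e1 : (∑ i, (c * τ i - tperp i) ^ 2)
        = c * (∑ i, τ i * (c * τ i - tperp i)) - ∑ i, tperp i * (c * τ i - tperp i) := by
      rw [Finset.mul_sum, ← Finset.sum_sub_distrib]
      refine Finset.sum_congr rfl fun i _ => ?_
      ring
    rw [e1, hτx _ hwIm, hperp _ hwIm]
    ring
  have htperp : ∀ i, tperp i = c * τ i := by
    intro i
    have h := (Finset.sum_eq_zero_iff_of_nonneg (fun i _ => sq_nonneg (c * τ i - tperp i))).mp hw0
      i (Finset.mem_univ i)
    have := sq_eq_zero_iff.mp h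
    linarith
  -- |tperp|² = c²
  have htperpsq : (∑ i, tperp i ^ 2) = c ^ 2 := by
    have : (∑ i, tperp i ^ 2) = c ^ 2 * ∑ i, τ i * τ i := by
      rw [Finset.mul_sum]
      refine Finset.sum_congr rfl fun i _ => ?_
      rw [htperp i]; ring
    rw [this, hτ]; ring
  have hsqrt : Real.sqrt (∑ i, tperp i ^ 2) = c := by
    rw [htperpsq, Real.sqrt_sq hc0]
  -- |x|² = 4π²(|ξ|² - S)
  have hxsq : (∑ i, ∑ j, x i j ^ 2)
      = 4 * π ^ 2 * ((∑ i, ∑ j, ξ i j ^ 2) - ∑ k, (∑ a, ξ a k * τ a) ^ 2) := by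
    have hswap : (∑ i, ∑ j, x i j ^ 2) = ∑ j, ∑ i, x i j ^ 2 := Finset.sum_comm
    have hcolsq : ∀ j, (∑ i, x i j ^ 2)
        = 4 * π ^ 2 * ((∑ i, ξ i j ^ 2) - (∑ a, ξ a j * τ a) ^ 2) := by
      intro j
      have h1 : (∑ i, ξ i j * τ i) = ∑ a, ξ a j * τ a := rfl
      have h1' : (∑ i, τ i * ξ i j) = ∑ a, ξ a j * τ a := by
        rw [← h1]; exact Finset.sum_congr rfl fun i _ => mul_comm _ _
      have h2 : (∑ i, x i j ^ 2)
          = ∑ i, (4 * π ^ 2 * ξ i j ^ 2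
              - (8 * π ^ 2 * (∑ a, τ a * ξ a j)) * (τ i * ξ i j)
              + (4 * π ^ 2 * (∑ a, τ a * ξ a j) ^ 2) * (τ i * τ i)) := by
        refine Finset.sum_congr rfl fun i _ => ?_
        rw [hx]; ring
      have h3 : (∑ a, τ a * ξ a j) = ∑ a, ξ a j * τ a :=
        Finset.sum_congr rfl fun a _ => mul_comm _ _
      rw [h2, Finset.sum_add_distrib, Finset.sum_sub_distrib, ← Finset.mul_sum,
        ← Finset.mul_sum, ← Finset.mul_sum, h1', hτ]
      ring
    rw [hswap]
    calc (∑ j, ∑ i, x i j ^ 2)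
        = ∑ j, 4 * π ^ 2 * ((∑ i, ξ i j ^ 2) - (∑ a, ξ a j * τ a) ^ 2) :=
          Finset.sum_congr rfl fun j _ => hcolsq j
      _ = 4 * π ^ 2 * ∑ j, ((∑ i, ξ i j ^ 2) - (∑ a, ξ a j * τ a) ^ 2) :=
          (Finset.mul_sum _ _ _).symm
      _ = 4 * π ^ 2 * ((∑ j, ∑ i, ξ i j ^ 2) - ∑ j, (∑ a, ξ a j * τ a) ^ 2) := by
          rw [Finset.sum_sub_distrib]
      _ = 4 * π ^ 2 * ((∑ i, ∑ j, ξ i j ^ 2) - ∑ j, (∑ a, ξ a j * τ a) ^ 2) := by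
          have hsw2 : (∑ j, ∑ i, ξ i j ^ 2) = ∑ i, ∑ j, ξ i j ^ 2 := Finset.sum_comm
          rw [hsw2]
  rw [hsqrt, hxsq, hc]
  ring
end

section
/- Define ψ : (ℝ^q \ {0}) × (ℝ^q \ {0}) → ℝ by ψ(x,t) = |t|² - ⟨x,t⟩²/|x|² - π² ⟨x,t⟩⁴/|x|^8. At any point (x,t) with ψ(x,t) = 0, writing ∇_t ψ = a t + b x and ∇_x ψ = b t + c x, one has ac - b² = -16π⁴ ⟨x,t⟩^6 / |x|^16. -/
open scoped BigOperators RealInnerProductSpace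
open Real

/-- `ψ(x,t) = |t|² - ⟨x,t⟩²/|x|² - π²⟨x,t⟩⁴/|x|⁸` on `ℝ^q × ℝ^q`. -/
noncomputable def psi {q : ℕ} (x t : EuclideanSpace ℝ (Fin q)) : ℝ :=
  ‖t‖ ^ 2 - ⟪x, t⟫ ^ 2 / ‖x‖ ^ 2 - π ^ 2 * ⟪x, t⟫ ^ 4 / ‖x‖ ^ 8

private theorem grad_t {q : ℕ} (x t : EuclideanSpace ℝ (Fin q)) :
    HasGradientAt (fun t' => psi x t')
      ((2:ℝ) • t + (-(2*⟪x,t⟫/‖x‖^2 + 4*π^2*⟪x,t⟫^3/‖x‖^8)) • x) t := by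
  have hs : HasFDerivAt (fun t' : EuclideanSpace ℝ (Fin q) => ⟪x, t'⟫) (innerSL ℝ x) t :=
    (innerSL ℝ x).hasFDerivAt
  have hs2 : HasFDerivAt (fun t' : EuclideanSpace ℝ (Fin q) => ⟪x, t'⟫^2)
      ((2*⟪x,t⟫) • (innerSL ℝ x : _ →L[ℝ] ℝ)) t := by
    simpa [Function.comp_def] using (hasDerivAt_pow 2 (⟪x,t⟫)).comp_hasFDerivAt t hs
  have hs4 : HasFDerivAt (fun t' : EuclideanSpace ℝ (Fin q) => ⟪x, t'⟫^4)
      ((4*⟪x,t⟫^3) • (innerSL ℝ x : _ →L[ℝ] ℝ)) t := by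
    simpa [Function.comp_def] using (hasDerivAt_pow 4 (⟪x,t⟫)).comp_hasFDerivAt t hs
  have hn : HasFDerivAt (fun t' : EuclideanSpace ℝ (Fin q) => ‖t'‖^2)
      ((2:ℝ) • (innerSL ℝ t : _ →L[ℝ] ℝ)) t := by
    refine ((hasFDerivAt_id t).norm_sq).congr_fderiv ?_
    ext y; simp
  have H := (hn.sub (hs2.const_mul ((‖x‖^2)⁻¹))).sub (hs4.const_mul (π^2/‖x‖^8))
  have hfun : (fun t' => psi x t')
      = fun t' : EuclideanSpace ℝ (Fin q) =>
        ‖t'‖^2 - (‖x‖^2)⁻¹ * ⟪x, t'⟫^2 - (π^2/‖x‖^8) * ⟪x, t'⟫^4 := by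
    funext y; simp only [psi]; ring
  rw [hfun, hasGradientAt_iff_hasFDerivAt]
  refine H.congr_fderiv ?_
  ext y
  simp [InnerProductSpace.toDual_apply_apply, inner_add_left, real_inner_smul_left]
  ring

private theorem grad_x {q : ℕ} (x t : EuclideanSpace ℝ (Fin q)) (hx : x ≠ 0) :
    HasGradientAt (fun x' => psi x' t)
      ((-(2*⟪x,t⟫/‖x‖^2 + 4*π^2*⟪x,t⟫^3/‖x‖^8)) • t
        + (2*⟪x,t⟫^2/‖x‖^4 + 8*π^2*⟪x,t⟫^4/‖x‖^10) • x) x := by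
  have hr : (‖x‖:ℝ) ≠ 0 := norm_ne_zero_iff.mpr hx
  have hr2 : (‖x‖^2 : ℝ) ≠ 0 := pow_ne_zero _ hr
  have hs : HasFDerivAt (fun x' : EuclideanSpace ℝ (Fin q) => ⟪x', t⟫) (innerSL ℝ t) x := by
    have := (innerSL ℝ t).hasFDerivAt (x := x)
    convert this using 1
    funext y; simp only [innerSL_apply_apply]; exact real_inner_comm t y
  have hs2 : HasFDerivAt (fun x' : EuclideanSpace ℝ (Fin q) => ⟪x', t⟫^2)
      ((2*⟪x,t⟫) • (innerSL ℝ t : _ →L[ℝ] ℝ)) x := by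
    simpa [real_inner_comm, Function.comp_def] using (hasDerivAt_pow 2 (⟪x,t⟫)).comp_hasFDerivAt x hs
  have hs4 : HasFDerivAt (fun x' : EuclideanSpace ℝ (Fin q) => ⟪x', t⟫^4)
      ((4*⟪x,t⟫^3) • (innerSL ℝ t : _ →L[ℝ] ℝ)) x := by
    simpa [real_inner_comm, Function.comp_def] using (hasDerivAt_pow 4 (⟪x,t⟫)).comp_hasFDerivAt x hs
  have hn : HasFDerivAt (fun x' : EuclideanSpace ℝ (Fin q) => ‖x'‖^2)
      ((2:ℝ) • (innerSL ℝ x : _ →L[ℝ] ℝ)) x := by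
    refine ((hasFDerivAt_id x).norm_sq).congr_fderiv ?_
    ext y; simp
  have hinv : HasFDerivAt (fun x' : EuclideanSpace ℝ (Fin q) => (‖x'‖^2)⁻¹)
      ((-((‖x‖^2)^2)⁻¹) • ((2:ℝ) • (innerSL ℝ x : _ →L[ℝ] ℝ))) x :=
    (hasDerivAt_inv hr2).comp_hasFDerivAt x hn
  have hn4 : HasFDerivAt (fun x' : EuclideanSpace ℝ (Fin q) => (‖x'‖^2)^4)
      ((4*(‖x‖^2)^3) • ((2:ℝ) • (innerSL ℝ x : _ →L[ℝ] ℝ))) x := by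
    simpa [Function.comp_def] using (hasDerivAt_pow 4 (‖x‖^2)).comp_hasFDerivAt x hn
  have hinv4 : HasFDerivAt (fun x' : EuclideanSpace ℝ (Fin q) => ((‖x'‖^2)^4)⁻¹)
      ((-(((‖x‖^2)^4)^2)⁻¹) • ((4*(‖x‖^2)^3) • ((2:ℝ) • (innerSL ℝ x : _ →L[ℝ] ℝ)))) x :=
    (hasDerivAt_inv (pow_ne_zero _ hr2)).comp_hasFDerivAt x hn4
  have H := ((hs2.mul hinv).const_sub (‖t‖^2)).sub ((hs4.mul hinv4).const_mul (π^2))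
  have hfun : (fun x' => psi x' t)
      = fun x' : EuclideanSpace ℝ (Fin q) =>
        ‖t‖^2 - ⟪x', t⟫^2 * (‖x'‖^2)⁻¹ - π^2 * (⟪x', t⟫^4 * ((‖x'‖^2)^4)⁻¹) := by
    funext y; simp only [psi]; ring
  rw [hfun, hasGradientAt_iff_hasFDerivAt]
  refine H.congr_fderiv ?_
  ext y
  simp only [InnerProductSpace.toDual_apply_apply, inner_add_left, real_inner_smul_left,
    ContinuousLinearMap.add_apply, ContinuousLinearMap.sub_apply, ContinuousLinearMap.neg_apply,
    ContinuousLinearMap.smul_apply, innerSL_apply_apply, smul_eq_mul]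
  field_simp
  ring

/-- At a zero of `ψ` (where `x, t ≠ 0`), writing `∇_t ψ = a t + b x` and
`∇_x ψ = b t + c x`, one has `ac - b² = -16π⁴⟨x,t⟩⁶/|x|¹⁶`. -/
theorem stmt12 {q : ℕ} (x t : EuclideanSpace ℝ (Fin q)) (hx : x ≠ 0) (ht : t ≠ 0)
    (hzero : psi x t = 0) (a b c : ℝ)
    (hgt : gradient (fun t' => psi x t') t = a • t + b • x)
    (hgx : gradient (fun x' => psi x' t) x = b • t + c • x) :
    a * c - b ^ 2 = -16 * π ^ 4 * ⟪x, t⟫ ^ 6 / ‖x‖ ^ 16 := by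
  have hr : (‖x‖:ℝ) ≠ 0 := norm_ne_zero_iff.mpr hx
  set s : ℝ := ⟪x, t⟫ with hs_def
  set B : ℝ := -(2*s/‖x‖^2 + 4*π^2*s^3/‖x‖^8) with hB
  set C : ℝ := 2*s^2/‖x‖^4 + 8*π^2*s^4/‖x‖^10 with hC
  -- linear independence of t and x
  have hind : ∀ p r : ℝ, p • t + r • x = 0 → p = 0 ∧ r = 0 := by
    intro p r h
    by_cases hp : p = 0
    · subst hp
      simp only [zero_smul, zero_add, smul_eq_zero] at h
      exact ⟨rfl, h.resolve_right hx⟩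
    · exfalso
      have htx : t = (-(r/p)) • x := by
        have : p • t = (-r) • x := by
          rw [neg_smul]
          linear_combination (norm := module) h
        have := congrArg (fun v => p⁻¹ • v) this
        simp only [smul_smul, inv_mul_cancel₀ hp, one_smul] at this
        rw [this]; congr 1; field_simp
      set lam : ℝ := -(r/p)
      have hlam : psi x (lam • x) = 0 := by rw [← htx]; exact hzero
      have hst : ⟪x, lam • x⟫ = lam * ‖x‖^2 := by
        rw [real_inner_smul_right, real_inner_self_eq_norm_sq]
      have hnt : ‖lam • x‖^2 = lam^2 * ‖x‖^2 := by
        rw [norm_smul]; simp [mul_pow, sq_abs]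
      rw [psi, hst, hnt] at hlam
      have hlam0 : lam = 0 := by
        have : -(π^2 * lam^4) = 0 := by
          rw [← hlam]; field_simp; ring
        have h4 : lam^4 = 0 := by
          have hpi : (π:ℝ)^2 ≠ 0 := pow_ne_zero _ Real.pi_ne_zero
          have h5 : π^2 * lam^4 = 0 := by linarith
          exact (mul_eq_zero.mp h5).resolve_left hpi
        exact pow_eq_zero_iff (by norm_num) |>.mp h4
      apply ht
      rw [htx, hlam0, zero_smul]
  -- extract coefficients
  have hgt' : gradient (fun t' => psi x t') t = (2:ℝ) • t + B • x :=
    (grad_t x t).gradient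
  have hgx' : gradient (fun x' => psi x' t) x = B • t + C • x :=
    (grad_x x t hx).gradient
  have e1 : (a - 2) • t + (b - B) • x = 0 := by
    have := hgt.symm.trans hgt'
    linear_combination (norm := module) this
  have e2 : (b - B) • t + (c - C) • x = 0 := by
    have := hgx.symm.trans hgx'
    linear_combination (norm := module) this
  obtain ⟨ha1, hb1⟩ := hind _ _ e1
  obtain ⟨hb2, hc1⟩ := hind _ _ e2
  have ha : a = 2 := by linarith [sub_eq_zero.mp ha1]
  have hb : b = B := by linarith
  have hc : c = C := by linarith
  rw [ha, hb, hc, hB, hC]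
  field_simp
  ring
end

section
/- Let τ ∈ ℝ^q \ {0}, ξ ∈ ℝ^(q×p), η ∈ ℝ^p. With a = (P_τ ξ, η), b = (-τη^T/|τ|, ξ^T τ/|τ|), z = (P_τ^⊥ ξ, 0), the curve (u(s), v(s)) = e^{-sA_τ}(ξ, η) satisfies (u(s), v(s)) = a cos(|τ|s) + b sin(|τ|s) + z for all s ∈ ℝ. -/
open scoped BigOperators

set_option synthInstance.maxHeartbeats 1000000 in
open NormedSpace in
theorem exp_unique_aux {E : Type*} [NormedAddCommGroup E] [NormedSpace ℝ E] [CompleteSpace E]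
    (A : E →L[ℝ] E) (f : ℝ → E) (f' : ℝ → E)
    (hf : ∀ t, HasDerivAt f (f' t) t)
    (hAf : ∀ t, A (f t) + f' t = 0)
    (x : E) (hx : f 0 = x) (s : ℝ) :
    exp ((-s) • A) x = f s := by
  have hconst : ∀ t : ℝ, exp (t • A) (f t) = x := by
    have hg : ∀ t : ℝ, HasDerivAt (fun u : ℝ => exp (u • A) (f u)) 0 t := by
      intro t
      have h1 : HasDerivAt (fun u : ℝ => exp (u • A)) (exp (t • A) * A) t :=
        hasDerivAt_exp_smul_const (𝕂 := ℝ) A t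
      have h2 := h1.clm_apply (hf t)
      have : (exp (t • A) * A) (f t) + exp (t • A) (f' t) = 0 := by
        rw [ContinuousLinearMap.mul_apply, ← map_add, hAf t, map_zero]
      rwa [this] at h2
    have := is_const_of_deriv_eq_zero (f := fun u : ℝ => exp (u • A) (f u))
      (fun t => (hg t).differentiableAt) (fun t => (hg t).deriv)
    intro t
    have h0 := this t 0
    simpa [hx] using h0
  have hc : Commute ((-s) • A) (s • A) := (Commute.refl A).smul_left (-s) |>.smul_right s
  let +nondep : NormedAlgebra ℚ (E →L[ℝ] E) := .restrictScalars ℚ ℝ (E →L[ℝ] E)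
  have key := congrArg (fun T : E →L[ℝ] E => T (f s))
    (NormedSpace.exp_add_of_commute hc)
  simp only [neg_smul, neg_add_cancel, NormedSpace.exp_zero] at key
  rw [ContinuousLinearMap.mul_apply] at key
  rw [hconst s] at key
  simpa using key.symm

/-- With `a = (P_τξ, η)`, `b = (-τηᵀ/|τ|, ξᵀτ/|τ|)`, `z = (P_τ^⊥ξ, 0)`, the extremal control
`(u(s),v(s)) = e^{-sA_τ}(ξ,η)` equals `a cos(|τ|s) + b sin(|τ|s) + z`. -/
theorem stmt15 {q p : ℕ} (τ : Fin q → ℝ) (hτ : τ ≠ 0)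
    (ξ : Fin q → Fin p → ℝ) (η : Fin p → ℝ) (s : ℝ) :
    NormedSpace.exp ((-s) • AL q p τ) ((ξ, η) : V q p) =
      Real.cos (Real.sqrt (∑ c, τ c * τ c) * s) •
          (((fun i j => τ i * (∑ c, τ c * ξ c j) / (∑ c, τ c * τ c) : Fin q → Fin p → ℝ),
            η) : V q p)
        + Real.sin (Real.sqrt (∑ c, τ c * τ c) * s) •
          (((fun i j => -(τ i * η j) / Real.sqrt (∑ c, τ c * τ c) : Fin q → Fin p → ℝ),
            (fun k => (∑ i, ξ i k * τ i) / Real.sqrt (∑ c, τ c * τ c) : Fin p → ℝ)) : V q p)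
        + (((fun i j => ξ i j - τ i * (∑ c, τ c * ξ c j) / (∑ c, τ c * τ c) :
              Fin q → Fin p → ℝ), (0 : Fin p → ℝ)) : V q p) := by
  set S : ℝ := ∑ c, τ c * τ c with hSdef
  set r : ℝ := Real.sqrt S with hrdef
  have hS : 0 < S := by
    obtain ⟨i, hi⟩ := Function.ne_iff.mp hτ
    exact Finset.sum_pos' (fun c _ => mul_self_nonneg _)
      ⟨i, Finset.mem_univ i, mul_self_pos.mpr hi⟩
  have hr2 : r * r = S := Real.mul_self_sqrt hS.le
  have hr0 : r ≠ 0 := by positivity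
  set a : V q p := ((fun i j => τ i * (∑ c, τ c * ξ c j) / S : Fin q → Fin p → ℝ), η) with ha
  set b : V q p := ((fun i j => -(τ i * η j) / r : Fin q → Fin p → ℝ),
    (fun k => (∑ i, ξ i k * τ i) / r : Fin p → ℝ)) with hb
  set z : V q p := ((fun i j => ξ i j - τ i * (∑ c, τ c * ξ c j) / S : Fin q → Fin p → ℝ),
    (0 : Fin p → ℝ)) with hz
  set A := AL q p τ with hA
  -- key sum identity
  have hkey : ∀ X : ℝ, ∑ i, τ i * X / S * τ i = X := by
    intro X
    have : ∑ i, τ i * X / S * τ i = (∑ i, τ i * τ i) * (X / S) := by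
      rw [Finset.sum_mul]
      exact Finset.sum_congr rfl fun i _ => by ring
    rw [this, ← hSdef]
    field_simp
  have hswap : ∀ k, ∑ c, τ c * ξ c k = ∑ i, ξ i k * τ i := fun k =>
    Finset.sum_congr rfl fun i _ => mul_comm _ _
  have hAa : A a = (-r) • b := by
    rw [hA, AL_apply, ha, hb]
    refine Prod.ext ?_ ?_
    · funext i j
      simp only [Prod.smul_fst, Pi.smul_apply, smul_eq_mul]
      field_simp
    · funext k
      simp only [Prod.smul_snd, Pi.smul_apply, smul_eq_mul]
      rw [hkey, hswap]
      field_simp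
  have hAb : A b = r • a := by
    rw [hA, AL_apply, hb, ha]
    refine Prod.ext ?_ ?_
    · funext i j
      simp only [Prod.smul_fst, Pi.smul_apply, smul_eq_mul]
      rw [hswap, ← hr2]
      field_simp
    · funext k
      simp only [Prod.smul_snd, Pi.smul_apply, smul_eq_mul]
      have : ∑ i, -(τ i * η k) / r * τ i = -((∑ i, τ i * τ i) * (η k / r)) := by
        rw [show (fun i => -(τ i * η k) / r * τ i) = fun i => -(τ i * τ i * (η k / r)) from
          funext fun i => by ring]
        rw [Finset.sum_neg_distrib, ← Finset.sum_mul]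
      rw [this, ← hSdef, ← hr2]
      field_simp
  have hAz : A z = 0 := by
    rw [hA, AL_apply, hz]
    refine Prod.ext ?_ ?_
    · funext i j; simp
    · funext k
      have : ∑ i, (ξ i k - τ i * (∑ c, τ c * ξ c k) / S) * τ i
          = (∑ i, ξ i k * τ i) - ∑ i, τ i * (∑ c, τ c * ξ c k) / S * τ i := by
        rw [← Finset.sum_sub_distrib]
        exact Finset.sum_congr rfl fun i _ => by ring
      simp only [Prod.fst, Prod.snd]
      rw [this, hkey, hswap]
      simp
  -- the candidate solution
  set f : ℝ → V q p := fun t => Real.cos (r * t) • a + Real.sin (r * t) • b + z with hf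
  set f' : ℝ → V q p := fun t =>
    (-Real.sin (r * t) * r) • a + (Real.cos (r * t) * r) • b with hf'
  have hfd : ∀ t, HasDerivAt f (f' t) t := by
    intro t
    have hlin : HasDerivAt (fun u : ℝ => r * u) r t := by
      simpa using (hasDerivAt_id t).const_mul r
    have hcos : HasDerivAt (fun u : ℝ => Real.cos (r * u)) (-Real.sin (r * t) * r) t := by
      simpa [Function.comp_def] using (Real.hasDerivAt_cos (r * t)).comp t hlin
    have hsin : HasDerivAt (fun u : ℝ => Real.sin (r * u)) (Real.cos (r * t) * r) t := by
      simpa [Function.comp_def] using (Real.hasDerivAt_sin (r * t)).comp t hlin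
    exact ((hcos.smul_const a).add (hsin.smul_const b)).add_const z
  have hAf : ∀ t, A (f t) + f' t = 0 := by
    intro t
    simp only [hf, hf', map_add, map_smul, hAa, hAb, hAz]
    module
  have hx0 : f 0 = ((ξ, η) : V q p) := by
    simp only [hf, mul_zero, Real.cos_zero, Real.sin_zero, one_smul, zero_smul, add_zero]
    rw [ha, hz]
    refine Prod.ext ?_ ?_
    · funext i j
      simp only [Prod.fst_add, Pi.add_apply, div_eq_mul_inv]
      ring
    · funext k
      simp
  exact exp_unique_aux A f f' hfd hAf _ hx0 s
end
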